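/- Say a deck (β_1,…,β_B) of feasible ballots 'detects' a bijection σ if T^σ(β_1,…,β_B) ≠ T*(β_1,…,β_B). If a deck assigns a distinct number of total votes to every candidate (i.e., the map i ↦ |{b : i ∈ β_b}| is injective on N), then the deck detects every non-identity bijection σ on N. -/
import Mathlib


open Finset

variable {ι γ : Type*} [Fintype ι] [DecidableEq ι] [DecidableEq γ]

/-- A ballot `β` is feasible if, in every contest `c`, it selects at most `v c` candidates. -/
def feasibleBallot (con : ι → γ) (v : γ → ℕ) (β : Finset ι) : Prop :=
  ∀ c : γ, (β.filter fun j => con j = c).card ≤ v c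

/-- The tally of candidate `i` output by a machine whose candidate-to-target mapping is `σ`,
on the deck `β`. A ballot contributes iff it selects target `σ i` and the contest of `i`
is not interpreted as overvoted under `σ`. -/
def tally (con : ι → γ) (v : γ → ℕ) (σ : ι → ι) {B : ℕ}
    (β : Fin B → Finset ι) (i : ι) : ℕ :=
  (Finset.univ.filter fun b : Fin B => σ i ∈ β b ∧
    (Finset.univ.filter fun j : ι => con j = con i ∧ σ j ∈ β b).card ≤ v (con i)).card

/-- The number of ballots of the deck selecting the target of candidate `i`. -/
def voteCount {B : ℕ} (β : Fin B → Finset ι) (i : ι) : ℕ :=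
  (Finset.univ.filter fun b : Fin B => i ∈ β b).card

lemma tally_id_eq (con : ι → γ) (v : γ → ℕ) {B : ℕ} (β : Fin B → Finset ι)
    (hfeas : ∀ b, feasibleBallot con v (β b)) (i : ι) :
    tally con v id β i = voteCount β i := by
  unfold tally voteCount
  congr 1
  apply Finset.filter_congr
  intro b _
  simp only [id]
  constructor
  · exact fun h => h.1
  · intro h
    refine ⟨h, le_trans (le_of_eq ?_) (hfeas b (con i))⟩
    congr 1
    ext j
    simp [and_comm]

lemma tally_le (con : ι → γ) (v : γ → ℕ) (σ : ι → ι) {B : ℕ} (β : Fin B → Finset ι) (i : ι) :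
    tally con v σ β i ≤ voteCount β (σ i) := by
  unfold tally voteCount
  exact Finset.card_le_card (Finset.filter_subset_filter _ (fun b hb => hb) |>.trans
    (by intro b; simp +contextual))

theorem detects_all_of_injective_counts
    (con : ι → γ) (v : γ → ℕ) (hv : ∀ c, 1 ≤ v c)
    {B : ℕ} (β : Fin B → Finset ι)
    (hfeas : ∀ b, feasibleBallot con v (β b))
    (hinj : Function.Injective (voteCount β)) :
    ∀ σ : Equiv.Perm ι, σ ≠ 1 → tally con v (⇑σ) β ≠ tally con v id β := by
  intro σ hσ h
  apply hσ
  have hle : ∀ i, voteCount β i ≤ voteCount β (σ i) := by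
    intro i
    calc voteCount β i = tally con v id β i := (tally_id_eq con v β hfeas i).symm
    _ = tally con v (⇑σ) β i := by rw [h]
    _ ≤ voteCount β (σ i) := tally_le con v _ β i
  have hsum : ∑ i, voteCount β i = ∑ i, voteCount β (σ i) :=
    (Equiv.sum_comp σ (voteCount β)).symm
  have heq : ∀ i ∈ Finset.univ, voteCount β i = voteCount β (σ i) := by
    intro i _
    exact le_antisymm (hle i)
      (((Finset.sum_eq_sum_iff_of_le (fun i _ => hle i)).mp hsum i (Finset.mem_univ i)).ge)
  ext i
  exact (hinj (heq i (Finset.mem_univ i))).symm
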